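/- arXiv:1408.0202 — 3 statements merged into one kernel-verified Lean document; each statement's English description precedes it below -/
import Mathlib

section
/- Let A ∈ ℝ^{n×n}, B ∈ ℝ^{n×m}, let C ∈ ℝ^{n×n} be invertible, and let ε ≥ 0. Suppose r̄_{k+1} = A r̄_k + B ū_k for k = 0,…,K−1 and y_k = C r̄_k + e_k with ‖e_k‖₂ ≤ ε for k = 0,…,K, and suppose the sequences (r*_k)_{k=0}^K, (u*_k)_{k=0}^{K−1} satisfy r*_{k+1} = A r*_k + B u*_k for k = 0,…,K−1 and ‖y_k − C r*_k‖₂ ≤ ε for k = 0,…,K. Then for every k = 0,…,K−1, ‖B(u*_k − ū_k)‖₂ ≤ 2 C₀ ε, where C₀ = (1/√σ_min(CᵀC))·(1 + √(σ_max(CᵀC)·σ_max(AᵀA)/σ_min(CᵀC))). -/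
open Matrix Finset

noncomputable def l2norm {k : ℕ} (x : Fin k → ℝ) : ℝ := Real.sqrt (∑ i, (x i) ^ 2)

def l1norm {k : ℕ} (x : Fin k → ℝ) : ℝ := ∑ i, |x i|

def Sparse {k : ℕ} (s : ℕ) (x : Fin k → ℝ) : Prop :=
  (Finset.univ.filter fun i => x i ≠ 0).card ≤ s

def RIP {n m : ℕ} (s : ℕ) (δ : ℝ) (Φ : Matrix (Fin n) (Fin m) ℝ) : Prop :=
  ∀ c : Fin m → ℝ, Sparse s c →
    (1 - δ) * (l2norm c) ^ 2 ≤ (l2norm (Φ.mulVec c)) ^ 2 ∧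
    (l2norm (Φ.mulVec c)) ^ 2 ≤ (1 + δ) * (l2norm c) ^ 2

noncomputable def sigmaMin {k : ℕ} (M : Matrix (Fin k) (Fin k) ℝ) (hM : M.IsHermitian) : ℝ :=
  ⨅ i, hM.eigenvalues i

noncomputable def sigmaMax {k : ℕ} (M : Matrix (Fin k) (Fin k) ℝ) (hM : M.IsHermitian) : ℝ :=
  ⨆ i, hM.eigenvalues i

/-!
Two state trajectories that explain the same noisy outputs within `ε` have outputs `2ε` apart,
so, since `‖C x‖₂ ≥ √σ_min(CᵀC) ‖x‖₂`, the states themselves are `2ε / √σ_min(CᵀC)` apart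
at every time. Subtracting the two dynamics gives `B (u*ₖ - ūₖ) = d_{k+1} - A dₖ` for the state
difference `d`, whence the bound `(1 + √σ_max(AᵀA)) · 2ε / √σ_min(CᵀC)`; the constant of the
statement is larger because `σ_min(CᵀC) ≤ σ_max(CᵀC)`.
-/

section Euclidean

variable {k p : ℕ}

lemma l2norm_eq_norm_toLp (x : Fin k → ℝ) : l2norm x = ‖WithLp.toLp 2 x‖ := by
  simp [l2norm, EuclideanSpace.norm_eq]

lemma l2norm_sub_le (x y : Fin k → ℝ) : l2norm (x - y) ≤ l2norm x + l2norm y := by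
  simpa only [l2norm_eq_norm_toLp, WithLp.toLp_sub] using norm_sub_le _ _

lemma l2norm_eq_sqrt_dotProduct (x : Fin k → ℝ) : l2norm x = √(x ⬝ᵥ x) := by
  simp [l2norm, dotProduct, sq]

lemma dotProduct_transpose_mul_self_mulVec (M : Matrix (Fin p) (Fin k) ℝ) (x : Fin k → ℝ) :
    x ⬝ᵥ (Mᵀ * M) *ᵥ x = (M *ᵥ x) ⬝ᵥ (M *ᵥ x) := by
  rw [← mulVec_mulVec, dotProduct_mulVec, vecMul_transpose]

end Euclidean

namespace Matrix.IsHermitian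

variable {k : ℕ} {M : Matrix (Fin k) (Fin k) ℝ}

lemma dotProduct_mulVec_eq_sum_eigenvalues (hM : M.IsHermitian) (x : Fin k → ℝ) :
    x ⬝ᵥ M *ᵥ x = ∑ i, hM.eigenvalues i *
      (star (hM.eigenvectorUnitary : Matrix (Fin k) (Fin k) ℝ) *ᵥ x) i ^ 2 := by
  set U : Matrix (Fin k) (Fin k) ℝ := ↑hM.eigenvectorUnitary
  have hUT : Uᵀ = star U := by rw [star_eq_conjTranspose, conjTranspose_eq_transpose_of_trivial]
  conv_lhs => rw [hM.spectral_theorem, Unitary.conjStarAlgAut_apply]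
  rw [← mulVec_mulVec, ← mulVec_mulVec, dotProduct_mulVec, ← mulVec_transpose, hUT]
  simp only [dotProduct, mulVec_diagonal]
  exact Finset.sum_congr rfl fun i _ => by
    simp only [RCLike.ofReal_real_eq_id, Function.comp_apply, id_eq]; ring

lemma dotProduct_self_eq_sum_sq_eigenvectorUnitary (hM : M.IsHermitian) (x : Fin k → ℝ) :
    x ⬝ᵥ x = ∑ i, (star (hM.eigenvectorUnitary : Matrix (Fin k) (Fin k) ℝ) *ᵥ x) i ^ 2 := by
  set U : Matrix (Fin k) (Fin k) ℝ := ↑hM.eigenvectorUnitary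
  have hU : U * star U = 1 := Unitary.mul_star_self_of_mem hM.eigenvectorUnitary.2
  have hUT : (star U)ᵀ = U := by
    rw [star_eq_conjTranspose, conjTranspose_eq_transpose_of_trivial, transpose_transpose]
  calc x ⬝ᵥ x = x ⬝ᵥ ((star U)ᵀ * star U) *ᵥ x := by rw [hUT, hU, one_mulVec]
    _ = ∑ i, (star U *ᵥ x) i ^ 2 := by
      rw [dotProduct_transpose_mul_self_mulVec]; simp only [dotProduct, sq]

end Matrix.IsHermitian

section Spectrum

variable {k : ℕ} {M : Matrix (Fin k) (Fin k) ℝ}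

lemma sigmaMin_le_eigenvalues (hM : M.IsHermitian) (i : Fin k) :
    sigmaMin M hM ≤ hM.eigenvalues i :=
  ciInf_le (Set.finite_range _).bddBelow i

lemma eigenvalues_le_sigmaMax (hM : M.IsHermitian) (i : Fin k) :
    hM.eigenvalues i ≤ sigmaMax M hM :=
  le_ciSup (Set.finite_range _).bddAbove i

lemma sigmaMin_le_sigmaMax [Nonempty (Fin k)] (hM : M.IsHermitian) :
    sigmaMin M hM ≤ sigmaMax M hM :=
  (sigmaMin_le_eigenvalues hM (Classical.arbitrary _)).trans (eigenvalues_le_sigmaMax hM _)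

lemma sigmaMin_pos_of_posDef [Nonempty (Fin k)] (hM : M.PosDef) : 0 < sigmaMin M hM.1 := by
  obtain ⟨i, hi⟩ := exists_eq_ciInf_of_finite (f := hM.1.eigenvalues)
  rw [sigmaMin, ← hi]
  exact hM.eigenvalues_pos i

lemma sigmaMax_nonneg_of_posSemidef [Nonempty (Fin k)] (hM : M.PosSemidef) :
    0 ≤ sigmaMax M hM.1 :=
  (hM.eigenvalues_nonneg (Classical.arbitrary _)).trans (eigenvalues_le_sigmaMax hM.1 _)

lemma sigmaMin_mul_dotProduct_self_le (hM : M.IsHermitian) (x : Fin k → ℝ) :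
    sigmaMin M hM * (x ⬝ᵥ x) ≤ x ⬝ᵥ M *ᵥ x := by
  rw [hM.dotProduct_self_eq_sum_sq_eigenvectorUnitary, hM.dotProduct_mulVec_eq_sum_eigenvalues,
    Finset.mul_sum]
  gcongr with i
  exact sigmaMin_le_eigenvalues hM i

lemma dotProduct_mulVec_le_sigmaMax_mul (hM : M.IsHermitian) (x : Fin k → ℝ) :
    x ⬝ᵥ M *ᵥ x ≤ sigmaMax M hM * (x ⬝ᵥ x) := by
  rw [hM.dotProduct_self_eq_sum_sq_eigenvectorUnitary, hM.dotProduct_mulVec_eq_sum_eigenvalues,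
    Finset.mul_sum]
  gcongr with i
  exact eigenvalues_le_sigmaMax hM i

end Spectrum

section Gram

variable {k p : ℕ} (M : Matrix (Fin p) (Fin k) ℝ) (hM : (Mᵀ * M).IsHermitian)

lemma sqrt_sigmaMin_mul_l2norm_le (x : Fin k → ℝ) :
    √(sigmaMin (Mᵀ * M) hM) * l2norm x ≤ l2norm (M *ᵥ x) := by
  rw [l2norm_eq_sqrt_dotProduct, l2norm_eq_sqrt_dotProduct,
    ← Real.sqrt_mul' _ (y := x ⬝ᵥ x) (dotProduct_star_self_nonneg x),
    ← dotProduct_transpose_mul_self_mulVec]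
  exact Real.sqrt_le_sqrt (sigmaMin_mul_dotProduct_self_le hM x)

lemma l2norm_mulVec_le (x : Fin k → ℝ) :
    l2norm (M *ᵥ x) ≤ √(sigmaMax (Mᵀ * M) hM) * l2norm x := by
  rw [l2norm_eq_sqrt_dotProduct, l2norm_eq_sqrt_dotProduct,
    ← Real.sqrt_mul' _ (y := x ⬝ᵥ x) (dotProduct_star_self_nonneg x),
    ← dotProduct_transpose_mul_self_mulVec]
  exact Real.sqrt_le_sqrt (dotProduct_mulVec_le_sigmaMax_mul hM x)

end Gram

section Network

variable {k p q : ℕ}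

lemma l2norm_sub_le_of_outputs (C : Matrix (Fin p) (Fin k) ℝ) (hC : (Cᵀ * C).IsHermitian)
    (hσ : 0 < sigmaMin (Cᵀ * C) hC) {ε : ℝ} {y e : Fin p → ℝ} {r r' : Fin k → ℝ}
    (hy : y = C *ᵥ r + e) (he : l2norm e ≤ ε) (hr' : l2norm (y - C *ᵥ r') ≤ ε) :
    l2norm (r' - r) ≤ 2 * ε / √(sigmaMin (Cᵀ * C) hC) := by
  have hCr : C *ᵥ (r' - r) = e - (y - C *ᵥ r') := by
    rw [mulVec_sub, hy]; abel
  rw [le_div_iff₀ (Real.sqrt_pos.mpr hσ), mul_comm]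
  calc √(sigmaMin (Cᵀ * C) hC) * l2norm (r' - r) ≤ l2norm (C *ᵥ (r' - r)) :=
        sqrt_sigmaMin_mul_l2norm_le C hC _
    _ ≤ l2norm e + l2norm (y - C *ᵥ r') := hCr ▸ l2norm_sub_le _ _
    _ ≤ 2 * ε := by linarith

lemma l2norm_mulVec_sub_le_of_dynamics (A : Matrix (Fin k) (Fin k) ℝ)
    (B : Matrix (Fin k) (Fin q) ℝ) (hA : (Aᵀ * A).IsHermitian) {δ : ℝ}
    {r₀ r₁ r₀' r₁' : Fin k → ℝ} {u u' : Fin q → ℝ}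
    (h : r₁ = A *ᵥ r₀ + B *ᵥ u) (h' : r₁' = A *ᵥ r₀' + B *ᵥ u')
    (h₀ : l2norm (r₀' - r₀) ≤ δ) (h₁ : l2norm (r₁' - r₁) ≤ δ) :
    l2norm (B *ᵥ (u' - u)) ≤ (1 + √(sigmaMax (Aᵀ * A) hA)) * δ := by
  have hBu : B *ᵥ (u' - u) = (r₁' - r₁) - A *ᵥ (r₀' - r₀) := by
    rw [mulVec_sub, mulVec_sub, h, h']; abel
  calc l2norm (B *ᵥ (u' - u)) ≤ l2norm (r₁' - r₁) + l2norm (A *ᵥ (r₀' - r₀)) :=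
        hBu ▸ l2norm_sub_le _ _
    _ ≤ δ + √(sigmaMax (Aᵀ * A) hA) * δ := by
        gcongr
        exact (l2norm_mulVec_le A hA _).trans (by gcongr)
    _ = (1 + √(sigmaMax (Aᵀ * A) hA)) * δ := by ring

end Network

/-- bound on ‖B(u*ₖ − ūₖ)‖₂ in terms of the network matrices
(equation (13)/(14) of the paper). -/
theorem stmt3 {n m K : ℕ}
    (A : Matrix (Fin n) (Fin n) ℝ) (B : Matrix (Fin n) (Fin m) ℝ)
    (C : Matrix (Fin n) (Fin n) ℝ) (hC : IsUnit C)
    (hHC : (Cᵀ * C).IsHermitian) (hHA : (Aᵀ * A).IsHermitian)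
    (ε : ℝ) (hε : 0 ≤ ε)
    (y rbar : Fin (K + 1) → Fin n → ℝ) (ubar : Fin K → Fin m → ℝ)
    (e : Fin (K + 1) → Fin n → ℝ)
    (hdynbar : ∀ k : Fin K, rbar k.succ = A.mulVec (rbar k.castSucc) + B.mulVec (ubar k))
    (houtbar : ∀ k, y k = C.mulVec (rbar k) + e k)
    (he : ∀ k, l2norm (e k) ≤ ε)
    (rstar : Fin (K + 1) → Fin n → ℝ) (ustar : Fin K → Fin m → ℝ)
    (hdynstar : ∀ k : Fin K, rstar k.succ = A.mulVec (rstar k.castSucc) + B.mulVec (ustar k))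
    (houtstar : ∀ k, l2norm (y k - C.mulVec (rstar k)) ≤ ε) :
    ∀ k : Fin K,
      l2norm (B.mulVec (ustar k - ubar k)) ≤
        2 * ((1 / Real.sqrt (sigmaMin (Cᵀ * C) hHC)) *
          (1 + Real.sqrt (sigmaMax (Cᵀ * C) hHC * sigmaMax (Aᵀ * A) hHA /
            sigmaMin (Cᵀ * C) hHC))) * ε := by
  intro k
  rcases isEmpty_or_nonempty (Fin n) with hn | hn
  · -- for `n = 0` both sides vanish: `σ_min` is an empty infimum, hence `0`, and `1 / √0 = 0`
    simp [l2norm, sigmaMin, Real.iInf_of_isEmpty]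
  set σmin := sigmaMin (Cᵀ * C) hHC
  set σA := sigmaMax (Aᵀ * A) hHA
  have hσmin : 0 < σmin := sigmaMin_pos_of_posDef
    (PosDef.conjTranspose_mul_self C (mulVec_injective_iff_isUnit.mpr hC))
  have hσA : 0 ≤ σA := sigmaMax_nonneg_of_posSemidef (posSemidef_conjTranspose_mul_self A)
  have hstate : ∀ j, l2norm (rstar j - rbar j) ≤ 2 * ε / √σmin := fun j =>
    l2norm_sub_le_of_outputs C hHC hσmin (houtbar j) (he j) (houtstar j)
  have hgain : √σA ≤ √(sigmaMax (Cᵀ * C) hHC * σA / σmin) := by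
    gcongr
    rw [le_div_iff₀ hσmin, mul_comm]
    exact mul_le_mul_of_nonneg_right (sigmaMin_le_sigmaMax hHC) hσA
  calc l2norm (B *ᵥ (ustar k - ubar k)) ≤ (1 + √σA) * (2 * ε / √σmin) :=
        l2norm_mulVec_sub_le_of_dynamics A B hHA (hdynbar k) (hdynstar k) (hstate _) (hstate _)
    _ ≤ (1 + √(sigmaMax (Cᵀ * C) hHC * σA / σmin)) * (2 * ε / √σmin) := by gcongr
    _ = _ := by ring
end

section
/- (Cone constraint, Lemma 3.) Let s ≥ 1 and let ū_0,…,ū_{K−1} and u*_0,…,u*_{K−1} be vectors in ℝ^m with each ū_k s-sparse and ∑_{k=0}^{K−1}‖u*_k‖₁ ≤ ∑_{k=0}^{K−1}‖ū_k‖₁. Set h_k = u*_k − ū_k and T0(k) = supp(ū_k). For each k assume |T0(k)^c| ≥ s and let T1(k) ⊆ T0(k)^c be a set of exactly s indices such that |(h_k)_i| ≥ |(h_k)_j| for every i ∈ T1(k) and every j ∈ T0(k)^c ∖ T1(k) (i.e., T1(k) contains the s largest-magnitude entries of h_k outside T0(k)). Then ∑_{k=0}^{K−1} ‖(h_k)_{(T0(k)∪T1(k))^c}‖₂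 ≤ ∑_{k=0}^{K−1} ‖(h_k)_{T0(k)}‖₂. -/
open Matrix Finset

noncomputable def support {k : ℕ} (x : Fin k → ℝ) : Finset (Fin k) :=
  Finset.univ.filter fun i => x i ≠ 0

def restrict {k : ℕ} (T : Finset (Fin k)) (x : Fin k → ℝ) : Fin k → ℝ :=
  fun i => if i ∈ T then x i else 0

/-- cone constraint in the ℓ2 norm (Lemma 3 of the paper). -/
theorem stmt5 {m K s : ℕ} (hs : 1 ≤ s)
    (ubar ustar : Fin K → Fin m → ℝ)
    (hsp : ∀ k, Sparse s (ubar k))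
    (hopt : ∑ k, l1norm (ustar k) ≤ ∑ k, l1norm (ubar k))
    (T1 : Fin K → Finset (Fin m))
    (hcard : ∀ k, s ≤ ((support (ubar k))ᶜ : Finset (Fin m)).card)
    (hT1sub : ∀ k, T1 k ⊆ (support (ubar k))ᶜ)
    (hT1card : ∀ k, (T1 k).card = s)
    (hT1max : ∀ k, ∀ i ∈ T1 k, ∀ j ∈ (support (ubar k))ᶜ \ T1 k,
      |(ustar k - ubar k) j| ≤ |(ustar k - ubar k) i|) :
    ∑ k, l2norm (restrict ((support (ubar k) ∪ T1 k)ᶜ) (ustar k - ubar k)) ≤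
      ∑ k, l2norm (restrict (support (ubar k)) (ustar k - ubar k)) := by
  classical
  set h : Fin K → Fin m → ℝ := fun k => ustar k - ubar k with hh
  have hsqs : (0:ℝ) < Real.sqrt s := Real.sqrt_pos.2 (by exact_mod_cast hs)
  -- sum of squares over restriction
  have hres : ∀ (T : Finset (Fin m)) (x : Fin m → ℝ),
      l2norm (_root_.restrict T x) = Real.sqrt (∑ i ∈ T, (x i) ^ 2) := by
    intro T x
    unfold l2norm _root_.restrict
    congr 1
    have : ∀ i, (if i ∈ T then x i else 0) ^ 2 = if i ∈ T then (x i) ^ 2 else 0 := by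
      intro i; split <;> simp
    simp_rw [this]
    rw [Finset.sum_ite_mem, Finset.univ_inter]
  -- key1 : tail l2 ≤ l1 over T0ᶜ / sqrt s
  have key1 : ∀ k, l2norm (restrict ((support (ubar k) ∪ T1 k)ᶜ) (h k)) ≤
      (∑ j ∈ (support (ubar k))ᶜ, |h k j|) / Real.sqrt s := by
    intro k
    set T0 := support (ubar k)
    have hA : (T0 ∪ T1 k)ᶜ = T0ᶜ \ T1 k := by
      rw [Finset.compl_union]
      ext j; simp [Finset.mem_sdiff, and_comm]
    set Sc := ∑ j ∈ T0ᶜ, |h k j| with hSc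
    have hScnn : 0 ≤ Sc := Finset.sum_nonneg fun j _ => abs_nonneg _
    have hS1 : ∑ i ∈ T1 k, |h k i| ≤ Sc :=
      Finset.sum_le_sum_of_subset_of_nonneg (hT1sub k) (fun j _ _ => abs_nonneg _)
    have hbound : ∀ j ∈ T0ᶜ \ T1 k, |h k j| ≤ Sc / s := by
      intro j hj
      have hmul : (s : ℝ) * |h k j| ≤ ∑ i ∈ T1 k, |h k i| := by
        calc (s : ℝ) * |h k j| = ∑ _i ∈ T1 k, |h k j| := by
              rw [Finset.sum_const, hT1card k, nsmul_eq_mul]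
          _ ≤ ∑ i ∈ T1 k, |h k i| :=
              Finset.sum_le_sum fun i hi => hT1max k i hi j hj
      have hspos : (0:ℝ) < s := by exact_mod_cast hs
      rw [le_div_iff₀ hspos]
      calc |h k j| * s = s * |h k j| := mul_comm _ _
        _ ≤ ∑ i ∈ T1 k, |h k i| := hmul
        _ ≤ Sc := hS1
    have hsum : ∑ j ∈ T0ᶜ \ T1 k, (h k j) ^ 2 ≤ Sc ^ 2 / s := by
      have h1 : ∑ j ∈ T0ᶜ \ T1 k, (h k j) ^ 2 ≤ ∑ j ∈ T0ᶜ \ T1 k, (Sc / s) * |h k j| := by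
        apply Finset.sum_le_sum
        intro j hj
        have : (h k j) ^ 2 = |h k j| * |h k j| := by rw [← sq_abs, sq]
        rw [this]
        exact mul_le_mul_of_nonneg_right (hbound j hj) (abs_nonneg _)
      have h2 : ∑ j ∈ T0ᶜ \ T1 k, (Sc / s) * |h k j| ≤ (Sc / s) * Sc := by
        rw [← Finset.mul_sum]
        have h3 : ∑ j ∈ T0ᶜ \ T1 k, |h k j| ≤ Sc :=
          Finset.sum_le_sum_of_subset_of_nonneg (Finset.sdiff_subset)
            (fun j _ _ => abs_nonneg _)
        exact mul_le_mul_of_nonneg_left h3 (div_nonneg hScnn (by positivity))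
      calc ∑ j ∈ T0ᶜ \ T1 k, (h k j) ^ 2 ≤ (Sc / s) * Sc := h1.trans h2
        _ = Sc ^ 2 / s := by ring
    rw [hres, hA]
    calc Real.sqrt (∑ j ∈ T0ᶜ \ T1 k, (h k j) ^ 2)
        ≤ Real.sqrt (Sc ^ 2 / s) := Real.sqrt_le_sqrt hsum
      _ = Sc / Real.sqrt s := by
          rw [Real.sqrt_div (sq_nonneg Sc), Real.sqrt_sq hScnn]
  -- key2 : l1 over T0 ≤ sqrt s * l2 over T0
  have key2 : ∀ k, ∑ j ∈ support (ubar k), |h k j| ≤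
      Real.sqrt s * l2norm (restrict (support (ubar k)) (h k)) := by
    intro k
    set T0 := support (ubar k)
    have hcs := Finset.sum_mul_sq_le_sq_mul_sq T0 (fun j => |h k j|) (fun _ => (1:ℝ))
    simp only [mul_one, one_pow] at hcs
    have hT0nn : (0:ℝ) ≤ ∑ j ∈ T0, |h k j| := Finset.sum_nonneg fun j _ => abs_nonneg _
    have habs : ∀ j, |h k j| ^ 2 = (h k j) ^ 2 := fun j => sq_abs _
    simp only [habs, Finset.sum_const, nsmul_eq_mul, mul_one] at hcs
    have hcard0 : (T0.card : ℝ) ≤ s := by exact_mod_cast hsp k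
    have hsqnn : (0:ℝ) ≤ ∑ j ∈ T0, (h k j) ^ 2 := Finset.sum_nonneg fun j _ => sq_nonneg _
    rw [mul_comm] at hcs
    have : (∑ j ∈ T0, |h k j|) ^ 2 ≤ s * ∑ j ∈ T0, (h k j) ^ 2 :=
      hcs.trans (mul_le_mul_of_nonneg_right hcard0 hsqnn)
    have := Real.sqrt_le_sqrt this
    rw [Real.sqrt_sq hT0nn, Real.sqrt_mul (by positivity)] at this
    rw [hres]
    exact this
  -- key3 : cone constraint in l1
  have key3 : ∑ k, ∑ j ∈ (support (ubar k))ᶜ, |h k j| ≤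
      ∑ k, ∑ j ∈ support (ubar k), |h k j| := by
    have hper : ∀ k, l1norm (ubar k) - (∑ j ∈ support (ubar k), |h k j|)
        + (∑ j ∈ (support (ubar k))ᶜ, |h k j|) ≤ l1norm (ustar k) := by
      intro k
      set T0 := support (ubar k)
      have hzero : ∀ j ∈ T0ᶜ, ubar k j = 0 := by
        intro j hj
        simpa [T0, support] using hj
      have hsplit : l1norm (ustar k) =
          (∑ j ∈ T0, |ustar k j|) + ∑ j ∈ T0ᶜ, |ustar k j| := by
        unfold l1norm
        rw [← Finset.sum_add_sum_compl T0]
      have hl1ub : l1norm (ubar k) = ∑ j ∈ T0, |ubar k j| := by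
        unfold l1norm
        rw [← Finset.sum_add_sum_compl T0 (fun j => |ubar k j|)]
        have : ∑ j ∈ T0ᶜ, |ubar k j| = 0 :=
          Finset.sum_eq_zero fun j hj => by rw [hzero j hj, abs_zero]
        rw [this, add_zero]
      have h1 : ∑ j ∈ T0, |ubar k j| - ∑ j ∈ T0, |h k j| ≤ ∑ j ∈ T0, |ustar k j| := by
        rw [← Finset.sum_sub_distrib]
        apply Finset.sum_le_sum
        intro j _
        have : ustar k j = ubar k j + h k j := by simp [hh]
        rw [this]
        have := abs_add_le (ubar k j + h k j) (-(h k j))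
        simp only [add_neg_cancel_right, abs_neg] at this
        linarith
      have h2 : ∑ j ∈ T0ᶜ, |ustar k j| = ∑ j ∈ T0ᶜ, |h k j| := by
        apply Finset.sum_congr rfl
        intro j hj
        have : h k j = ustar k j - ubar k j := by simp [hh]
        rw [this, hzero j hj, sub_zero]
      rw [hsplit, h2, hl1ub]
      linarith
    have hsum := Finset.sum_le_sum (fun k (_ : k ∈ Finset.univ) => hper k)
    have := hsum.trans hopt
    simp only [Finset.sum_add_distrib, Finset.sum_sub_distrib] at this
    linarith
  -- combine
  calc ∑ k, l2norm (restrict ((support (ubar k) ∪ T1 k)ᶜ) (h k))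
      ≤ ∑ k, (∑ j ∈ (support (ubar k))ᶜ, |h k j|) / Real.sqrt s :=
        Finset.sum_le_sum fun k _ => key1 k
    _ = (∑ k, ∑ j ∈ (support (ubar k))ᶜ, |h k j|) / Real.sqrt s := by
        rw [Finset.sum_div]
    _ ≤ (∑ k, ∑ j ∈ support (ubar k), |h k j|) / Real.sqrt s := by
        exact (div_le_div_iff_of_pos_right hsqs).mpr key3
    _ ≤ (∑ k, Real.sqrt s * l2norm (restrict (support (ubar k)) (h k))) / Real.sqrt s := by
        exact (div_le_div_iff_of_pos_right hsqs).mpr (Finset.sum_le_sum fun k _ => key2 k)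
    _ = ∑ k, l2norm (restrict (support (ubar k)) (h k)) := by
        rw [← Finset.mul_sum, mul_comm, mul_div_assoc, div_self (ne_of_gt hsqs), mul_one]
end

section
/- Let s ≥ 1 and let B ∈ ℝ^{n×m} satisfy the RIP with constant δ_{2s} < 1; set α = 2√(1 + δ_{2s})/(1 − δ_{2s}) and ρ = √2·δ_{2s}/(1 − δ_{2s}). Let h ∈ ℝ^m, and let c ≥ 0, ε ≥ 0 be reals with ‖B h‖₂ ≤ 2cε. Let T0 ⊆ {1,…,m} with |T0| ≤ s and |T0^c| ≥ s, and let T1 ⊆ T0^c be a set of exactly s indices such that |h_i| ≥ |h_j| for every i ∈ T1 and every j ∈ T0^c ∖ T1 (i.e., T1 contains the s largest-magnitude entries of h outside T0). Then ‖h_{T0∪T1}‖₂ ≤ α c ε + ρ s^{−1/2} ‖h_{T0^c}‖₁. -/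
open Matrix Finset

/-!
Write `u = h_{T0 ∪ T1}`. By RIP, `(1 - δ)‖u‖² ≤ ‖Bu‖² = ⟨Bu, Bh⟩ - ⟨Bu, B h_{(T0 ∪ T1)ᶜ}⟩`,
and the first term is at most `√(1 + δ) ‖u‖ ‖Bh‖` by Cauchy–Schwarz. For the second, cut
`(T0 ∪ T1)ᶜ` greedily into blocks of the `s` largest remaining entries. Restricted
orthogonality bounds `|⟨B h_{Ti}, B h_block⟩|` by `δ ‖h_{Ti}‖ ‖h_block‖` for `i = 0, 1`, and
`‖h_{T0}‖ + ‖h_{T1}‖ ≤ √2 ‖u‖`. Every entry of a block is at most the average modulus over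
the previous block (over `T1` for the first one), so the block norms sum to at most
`s^{-1/2} ‖h_{T0ᶜ}‖₁`. Dividing by `‖u‖` gives the bound.
-/

lemma exists_subset_card_eq_forall_le {ι α : Type*} [DecidableEq ι] [LinearOrder α]
    (f : ι → α) (R : Finset ι) {k : ℕ} (hk : k ≤ R.card) :
    ∃ S ⊆ R, S.card = k ∧ ∀ i ∈ S, ∀ j ∈ R \ S, f j ≤ f i := by
  induction k with
  | zero => exact ⟨∅, empty_subset R, rfl, by simp⟩
  | succ k ih =>
    obtain ⟨S, hSR, hScard, hSmax⟩ := ih (by omega)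
    have hne : (R \ S).Nonempty := by
      rw [← card_pos, card_sdiff_of_subset hSR]
      omega
    obtain ⟨i, hi, himax⟩ := exists_max_image (R \ S) f hne
    refine ⟨insert i S, insert_subset (mem_sdiff.1 hi).1 hSR,
      by rw [card_insert_of_notMem (mem_sdiff.1 hi).2, hScard], ?_⟩
    intro i' hi' j hj
    have hj' : j ∈ R \ S := by
      rw [mem_sdiff, mem_insert, not_or] at hj
      exact mem_sdiff.2 ⟨hj.1, hj.2.2⟩
    rcases mem_insert.1 hi' with rfl | hi'S
    · exact himax j hj'
    · exact hSmax i' hi'S j hj'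

lemma sqrt_mul_div_self (s A : ℝ) : √s * (A / s) = (√s)⁻¹ * A := by
  rcases le_or_gt s 0 with hs | hs
  · simp [Real.sqrt_eq_zero'.2 hs]
  · rw [← Real.div_sqrt (x := s)]
    field_simp
    rw [Real.sq_sqrt hs.le]

lemma le_div_of_mul_sq_le_mul {a t W : ℝ} (ha : 0 < a) (hW : 0 ≤ W) (ht : 0 ≤ t)
    (h : a * t ^ 2 ≤ t * W) : t ≤ W / a := by
  rw [le_div_iff₀ ha]
  rcases ht.eq_or_lt with rfl | ht
  · simpa using hW
  · nlinarith

section Vectors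

variable {k : ℕ}

lemma l2norm_nonneg (x : Fin k → ℝ) : 0 ≤ l2norm x := Real.sqrt_nonneg _

lemma l2norm_sq (x : Fin k → ℝ) : l2norm x ^ 2 = x ⬝ᵥ x := by
  rw [l2norm, Real.sq_sqrt (by positivity), dotProduct]
  simp only [sq]

lemma eq_zero_of_l2norm_eq_zero {x : Fin k → ℝ} (hx : l2norm x = 0) : x = 0 := by
  rw [← dotProduct_self_eq_zero, ← l2norm_sq, hx, sq, zero_mul]

lemma dotProduct_le_l2norm_mul (x y : Fin k → ℝ) : x ⬝ᵥ y ≤ l2norm x * l2norm y :=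
  Real.sum_mul_le_sqrt_mul_sqrt _ _ _

lemma dotProduct_smul_add_smul_self (a b : ℝ) (x y : Fin k → ℝ) :
    (a • x + b • y) ⬝ᵥ (a • x + b • y) =
      a ^ 2 * (x ⬝ᵥ x) + 2 * a * b * (x ⬝ᵥ y) + b ^ 2 * (y ⬝ᵥ y) := by
  simp only [add_dotProduct, dotProduct_add, smul_dotProduct, dotProduct_smul, smul_eq_mul,
    dotProduct_comm y x]
  ring

lemma support_restrict_subset (T : Finset (Fin k)) (x : Fin k → ℝ) :
    support (restrict T x) ⊆ T := by
  intro i hi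
  by_contra hiT
  simp [support, _root_.restrict, hiT] at hi

lemma support_smul_add_smul_subset (a b : ℝ) (x y : Fin k → ℝ) :
    support (a • x + b • y) ⊆ support x ∪ support y := by
  intro i hi
  by_contra hxy
  simp_all [support]

lemma Sparse.of_support_subset {s : ℕ} {x : Fin k → ℝ} {T : Finset (Fin k)}
    (hxT : support x ⊆ T) (hT : T.card ≤ s) : Sparse s x :=
  (card_le_card hxT).trans hT

lemma sparse_restrict {s : ℕ} {T : Finset (Fin k)} (hT : T.card ≤ s) (x : Fin k → ℝ) :
    Sparse s (restrict T x) :=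
  .of_support_subset (support_restrict_subset T x) hT

lemma Sparse.smul_add_smul {s s' : ℕ} {x y : Fin k → ℝ} (hx : Sparse s x) (hy : Sparse s' y)
    (a b : ℝ) : Sparse (s + s') (a • x + b • y) :=
  .of_support_subset (support_smul_add_smul_subset a b x y)
    ((card_union_le _ _).trans (add_le_add hx hy))

lemma dotProduct_eq_zero_of_disjoint_support {x y : Fin k → ℝ}
    (hxy : Disjoint (support x) (support y)) : x ⬝ᵥ y = 0 := by
  refine sum_eq_zero fun i _ => ?_
  by_contra hi
  have hix : i ∈ support x := by simp [support, left_ne_zero_of_mul hi]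
  exact disjoint_left.1 hxy hix (by simp [support, right_ne_zero_of_mul hi])

lemma restrict_add_restrict {S T : Finset (Fin k)} (hST : Disjoint S T) (x : Fin k → ℝ) :
    _root_.restrict S x + _root_.restrict T x = _root_.restrict (S ∪ T) x := by
  funext i
  by_cases hS : i ∈ S <;> by_cases hT : i ∈ T <;> simp_all [_root_.restrict, disjoint_left]

lemma l1norm_nonneg (x : Fin k → ℝ) : 0 ≤ l1norm x := sum_nonneg fun i _ => abs_nonneg (x i)

lemma l1norm_restrict (T : Finset (Fin k)) (x : Fin k → ℝ) :
    l1norm (restrict T x) = ∑ i ∈ T, |x i| := by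
  simp [l1norm, _root_.restrict, apply_ite, sum_ite_mem]

lemma l2norm_restrict_le_sqrt_card_mul {T : Finset (Fin k)} {x : Fin k → ℝ} {M : ℝ}
    (hM : ∀ i ∈ T, |x i| ≤ M) : l2norm (restrict T x) ≤ √T.card * M := by
  have hsq : l2norm (restrict T x) ^ 2 = ∑ i ∈ T, x i ^ 2 := by
    rw [l2norm, Real.sq_sqrt (by positivity)]
    simp [_root_.restrict, sum_ite_mem]
  have hbound : ∑ i ∈ T, x i ^ 2 ≤ T.card * M ^ 2 := by
    rw [← nsmul_eq_mul, ← sum_const]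
    exact sum_le_sum fun i hi => sq_le_sq' (abs_le.1 (hM i hi)).1 (abs_le.1 (hM i hi)).2
  rcases T.eq_empty_or_nonempty with rfl | ⟨i, hi⟩
  · simp [l2norm, _root_.restrict]
  have hM0 : 0 ≤ M := (abs_nonneg _).trans (hM i hi)
  rw [← Real.sqrt_sq hM0, ← Real.sqrt_mul (Nat.cast_nonneg _)]
  exact (le_abs_self _).trans (Real.abs_le_sqrt (hsq.trans_le hbound))

lemma l2norm_add_l2norm_le_sqrt_two_mul {x y : Fin k → ℝ}
    (hxy : Disjoint (support x) (support y)) :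
    l2norm x + l2norm y ≤ √2 * l2norm (x + y) := by
  have hpyth : l2norm (x + y) ^ 2 = l2norm x ^ 2 + l2norm y ^ 2 := by
    have := dotProduct_smul_add_smul_self 1 1 x y
    rw [one_smul, one_smul] at this
    rw [l2norm_sq, l2norm_sq, l2norm_sq, this, dotProduct_eq_zero_of_disjoint_support hxy]
    ring
  rw [← Real.sqrt_sq (l2norm_nonneg (x + y)), ← Real.sqrt_mul zero_le_two]
  refine (le_abs_self _).trans (Real.abs_le_sqrt ?_)
  nlinarith [sq_nonneg (l2norm x - l2norm y)]

end Vectors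

lemma map_restrict_le_of_blocks {m s : ℕ} (hs : 0 < s) (f : (Fin m → ℝ) →+ ℝ) {K : ℝ}
    (hK : 0 ≤ K) (x : Fin m → ℝ) (R : Finset (Fin m))
    (hf : ∀ S ⊆ R, S.card ≤ s → f (restrict S x) ≤ K * l2norm (restrict S x))
    {A : ℝ} (hA : 0 ≤ A) (hRA : ∀ j ∈ R, s * |x j| ≤ A) :
    f (restrict R x) ≤ K * ((√s)⁻¹ * (A + ∑ i ∈ R, |x i|)) := by
  induction R using Finset.strongInduction generalizing A with
  | H R ih =>
    rcases R.eq_empty_or_nonempty with rfl | hRne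
    · have : _root_.restrict (∅ : Finset (Fin m)) x = 0 := by funext i; simp [_root_.restrict]
      rw [this, map_zero]
      positivity
    -- the first block `S` holds the `s` largest entries of `R`; its average bounds the rest
    obtain ⟨S, hSR, hScard, hSmax⟩ :=
      exists_subset_card_eq_forall_le (|x ·|) R (min_le_right s R.card)
    have hSs : S.card ≤ s := hScard ▸ min_le_left _ _
    have hsplit : _root_.restrict S x + _root_.restrict (R \ S) x = _root_.restrict R x := by
      rw [restrict_add_restrict disjoint_sdiff, union_sdiff_of_subset hSR]
    have hhead : f (restrict S x) ≤ K * ((√s)⁻¹ * A) := by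
      have hentry : ∀ i ∈ S, |x i| ≤ A / s := fun i hi => by
        rw [le_div_iff₀ (by positivity), mul_comm]
        exact hRA i (hSR hi)
      calc f (restrict S x) ≤ K * l2norm (restrict S x) := hf S hSR hSs
        _ ≤ K * (√S.card * (A / s)) := by gcongr; exact l2norm_restrict_le_sqrt_card_mul hentry
        _ ≤ K * (√s * (A / s)) := by gcongr
        _ = K * ((√s)⁻¹ * A) := by rw [sqrt_mul_div_self]
    have hRS : ∀ j ∈ R \ S, s * |x j| ≤ ∑ i ∈ S, |x i| := by
      intro j hj
      have hS : S.card = s := by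
        by_contra hne
        have : S = R := eq_of_subset_of_card_le hSR (by omega)
        simp [this] at hj
      simpa [hS] using card_nsmul_le_sum S (|x ·|) _ (fun i hi => hSmax i hi j hj)
    have hsub : R \ S ⊂ R := by
      refine sdiff_ssubset hSR ?_
      rw [← card_pos, hScard]
      exact lt_min hs (card_pos.2 hRne)
    have hrest := ih (R \ S) hsub (fun S' hS' => hf S' (hS'.trans sdiff_subset))
      (sum_nonneg fun i _ => abs_nonneg _) hRS
    rw [← hsplit, map_add, ← sum_sdiff hSR]
    linarith

namespace RIP

variable {n m s : ℕ} {δ : ℝ} {B : Matrix (Fin n) (Fin m) ℝ}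

lemma nonneg (hB : RIP s δ B) (hs : 0 < s) (i : Fin m) : 0 ≤ δ := by
  have hsp : Sparse s (Pi.single i 1 : Fin m → ℝ) :=
    .of_support_subset (T := {i}) (fun j hj => by by_contra hji; simp_all [support]) (by simpa)
  have hnorm : l2norm (Pi.single i 1 : Fin m → ℝ) ^ 2 = 1 := by simp [l2norm_sq]
  have hrip := hB _ hsp
  rw [hnorm] at hrip
  linarith [hrip.1, hrip.2]

lemma l2norm_mulVec_le (hB : RIP s δ B) {x : Fin m → ℝ} (hx : Sparse s x) :
    l2norm (B *ᵥ x) ≤ √(1 + δ) * l2norm x := by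
  rw [← Real.sqrt_sq (l2norm_nonneg x), ← Real.sqrt_mul' _ (sq_nonneg _)]
  exact (le_abs_self _).trans (Real.abs_le_sqrt (hB x hx).2)

lemma abs_dotProduct_mulVec_le {s' : ℕ} (hB : RIP (s + s') δ B) {x y : Fin m → ℝ}
    (hx : Sparse s x) (hy : Sparse s' y) (hxy : Disjoint (support x) (support y)) :
    |(B *ᵥ x) ⬝ᵥ (B *ᵥ y)| ≤ δ * l2norm x * l2norm y := by
  rcases (mul_nonneg (l2norm_nonneg y) (l2norm_nonneg x)).eq_or_lt with hab | hab
  · rcases mul_eq_zero.1 hab.symm with hy0 | hx0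
    · rw [hy0, eq_zero_of_l2norm_eq_zero hy0]; simp
    · rw [hx0, eq_zero_of_l2norm_eq_zero hx0]; simp
  set a := l2norm y
  set b := l2norm x
  -- polarization, applied to `a • x ± b • y`: both have squared norm `2 a² b²`
  have hsq : ∀ σ : ℝ, σ ^ 2 = 1 →
      l2norm (a • x + (σ * b) • y) ^ 2 = 2 * a ^ 2 * b ^ 2 := by
    intro σ hσ
    rw [l2norm_sq, dotProduct_smul_add_smul_self, dotProduct_eq_zero_of_disjoint_support hxy,
      ← l2norm_sq x, ← l2norm_sq y]
    linear_combination b ^ 2 * a ^ 2 * hσ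
  have himage : ∀ σ : ℝ, l2norm (B *ᵥ (a • x + (σ * b) • y)) ^ 2 =
      a ^ 2 * l2norm (B *ᵥ x) ^ 2 + 2 * σ * a * b * ((B *ᵥ x) ⬝ᵥ (B *ᵥ y)) +
        σ ^ 2 * b ^ 2 * l2norm (B *ᵥ y) ^ 2 := by
    intro σ
    rw [l2norm_sq, mulVec_add, mulVec_smul, mulVec_smul, dotProduct_smul_add_smul_self,
      ← l2norm_sq (B *ᵥ x), ← l2norm_sq (B *ᵥ y)]
    ring
  have hplus := hB _ (hx.smul_add_smul hy a (1 * b))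
  have hminus := hB _ (hx.smul_add_smul hy a (-1 * b))
  rw [hsq 1 (by norm_num), himage] at hplus
  rw [hsq (-1) (by norm_num), himage] at hminus
  rw [abs_le]
  constructor
  · refine le_of_mul_le_mul_left ?_ hab
    linarith [hplus.1, hminus.2]
  · refine le_of_mul_le_mul_left ?_ hab
    linarith [hplus.2, hminus.1]

lemma neg_dotProduct_mulVec_restrict_le (hB : RIP (s + s) δ B) (x : Fin m → ℝ)
    {T0 T1 S : Finset (Fin m)} (hT01 : Disjoint T0 T1) (hT0 : T0.card ≤ s) (hT1 : T1.card ≤ s)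
    (hS : S.card ≤ s) (hT01S : Disjoint (T0 ∪ T1) S) :
    -((B *ᵥ restrict (T0 ∪ T1) x) ⬝ᵥ (B *ᵥ restrict S x)) ≤
      δ * (l2norm (restrict T0 x) + l2norm (restrict T1 x)) * l2norm (restrict S x) := by
  have hdisj : ∀ T ⊆ T0 ∪ T1, Disjoint (support (restrict T x)) (support (restrict S x)) :=
    fun T hT => (disjoint_of_subset_left hT hT01S).mono (support_restrict_subset T x)
      (support_restrict_subset S x)
  have h0 := hB.abs_dotProduct_mulVec_le (sparse_restrict hT0 x) (sparse_restrict hS x)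
    (hdisj T0 subset_union_left)
  have h1 := hB.abs_dotProduct_mulVec_le (sparse_restrict hT1 x) (sparse_restrict hS x)
    (hdisj T1 subset_union_right)
  rw [← restrict_add_restrict hT01, mulVec_add, add_dotProduct]
  linarith [neg_abs_le ((B *ᵥ restrict T0 x) ⬝ᵥ (B *ᵥ restrict S x)),
    neg_abs_le ((B *ᵥ restrict T1 x) ⬝ᵥ (B *ᵥ restrict S x))]

lemma neg_dotProduct_mulVec_restrict_compl_le (hB : RIP (s + s) δ B) (hs : 0 < s) (hδ : 0 ≤ δ)
    (x : Fin m → ℝ) {T0 T1 : Finset (Fin m)} (hT0 : T0.card ≤ s) (hT1sub : T1 ⊆ T0ᶜ)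
    (hT1 : T1.card = s) (hT1max : ∀ i ∈ T1, ∀ j ∈ T0ᶜ \ T1, |x j| ≤ |x i|) :
    -((B *ᵥ restrict (T0 ∪ T1) x) ⬝ᵥ (B *ᵥ restrict (T0 ∪ T1)ᶜ x)) ≤
      δ * √2 * l2norm (restrict (T0 ∪ T1) x) * ((√s)⁻¹ * l1norm (restrict T0ᶜ x)) := by
  have hT01 : Disjoint T0 T1 := disjoint_right.2 fun j hj => mem_compl.1 (hT1sub hj)
  have hR : T0ᶜ \ T1 = (T0 ∪ T1)ᶜ := by ext j; simp
  let f : (Fin m → ℝ) →+ ℝ := AddMonoidHom.mk'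
    (fun v => -((B *ᵥ restrict (T0 ∪ T1) x) ⬝ᵥ (B *ᵥ v)))
    (fun v w => by simp only [mulVec_add, dotProduct_add, neg_add])
  have hblocks := map_restrict_le_of_blocks hs f
    (mul_nonneg hδ (add_nonneg (l2norm_nonneg _) (l2norm_nonneg _))) x (T0 ∪ T1)ᶜ
    (fun S hS hSs => hB.neg_dotProduct_mulVec_restrict_le x hT01 hT0 hT1.le hSs
      (disjoint_of_subset_right hS disjoint_compl_right))
    (sum_nonneg fun i _ => abs_nonneg (x i))
    (fun j hj => by
      simpa [hT1] using card_nsmul_le_sum T1 (|x ·|) _ fun i hi => hT1max i hi j (hR ▸ hj))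
  have hL : ∑ i ∈ T1, |x i| + ∑ i ∈ (T0 ∪ T1)ᶜ, |x i| = l1norm (restrict T0ᶜ x) := by
    rw [← hR, add_comm, sum_sdiff hT1sub, l1norm_restrict]
  rw [hL] at hblocks
  have hpair := l2norm_add_l2norm_le_sqrt_two_mul
    (hT01.mono (support_restrict_subset T0 x) (support_restrict_subset T1 x))
  rw [restrict_add_restrict hT01] at hpair
  calc _ = f (restrict (T0 ∪ T1)ᶜ x) := rfl
    _ ≤ _ := hblocks
    _ ≤ _ := by
      refine mul_le_mul_of_nonneg_right ?_ (mul_nonneg (by positivity) (l1norm_nonneg _))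
      rw [mul_assoc δ]
      exact mul_le_mul_of_nonneg_left hpair hδ

lemma mul_sq_l2norm_restrict_le {k : ℕ} (hB : RIP k δ B) (x : Fin m → ℝ)
    {T : Finset (Fin m)} (hT : T.card ≤ k) :
    (1 - δ) * l2norm (restrict T x) ^ 2 ≤
      √(1 + δ) * l2norm (restrict T x) * l2norm (B *ᵥ x) +
        -((B *ᵥ restrict T x) ⬝ᵥ (B *ᵥ restrict Tᶜ x)) := by
  have hx : B *ᵥ x = B *ᵥ restrict T x + B *ᵥ restrict Tᶜ x := by
    rw [← mulVec_add, restrict_add_restrict disjoint_compl_right, union_compl]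
    congr 1
    funext j
    simp [_root_.restrict]
  calc (1 - δ) * l2norm (restrict T x) ^ 2 ≤ l2norm (B *ᵥ restrict T x) ^ 2 :=
        (hB _ (sparse_restrict hT x)).1
    _ = (B *ᵥ restrict T x) ⬝ᵥ (B *ᵥ x) +
          -((B *ᵥ restrict T x) ⬝ᵥ (B *ᵥ restrict Tᶜ x)) := by
      rw [l2norm_sq, hx, dotProduct_add]
      ring
    _ ≤ _ := by
      gcongr
      refine (dotProduct_le_l2norm_mul _ _).trans ?_
      gcongr
      · exact l2norm_nonneg _
      · exact hB.l2norm_mulVec_le (sparse_restrict hT x)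

end RIP

theorem stmt6_general {n m s : ℕ} (hs : 1 ≤ s)
    (B : Matrix (Fin n) (Fin m) ℝ)
    (δ : ℝ) (hδ : δ < 1) (hB : RIP (2 * s) δ B)
    (h : Fin m → ℝ) (c ε : ℝ)
    (hBh : l2norm (B.mulVec h) ≤ 2 * c * ε)
    (T0 T1 : Finset (Fin m))
    (hT0card : T0.card ≤ s)
    (hT1sub : T1 ⊆ T0ᶜ)
    (hT1card : T1.card = s)
    (hT1max : ∀ i ∈ T1, ∀ j ∈ T0ᶜ \ T1, |h j| ≤ |h i|) :
    l2norm (restrict (T0 ∪ T1) h) ≤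
      (2 * Real.sqrt (1 + δ) / (1 - δ)) * c * ε +
        (Real.sqrt 2 * δ / (1 - δ)) * (Real.sqrt s)⁻¹ * l1norm (restrict T0ᶜ h) := by
  obtain ⟨i, -⟩ : T1.Nonempty := card_pos.1 (by omega)
  have hδ0 : 0 ≤ δ := hB.nonneg (by omega) i
  rw [two_mul] at hB
  have hcore := hB.mul_sq_l2norm_restrict_le h ((card_union_le T0 T1).trans (by omega))
  have htail := hB.neg_dotProduct_mulVec_restrict_compl_le (by omega) hδ0 h hT0card hT1sub
    hT1card hT1max
  set u := _root_.restrict (T0 ∪ T1) h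
  set L := l1norm (_root_.restrict T0ᶜ h)
  have hcε : 0 ≤ 2 * c * ε := (l2norm_nonneg _).trans hBh
  have hL : 0 ≤ L := l1norm_nonneg _
  have hkey : (1 - δ) * l2norm u ^ 2 ≤
      l2norm u * (√(1 + δ) * (2 * c * ε) + δ * √2 * ((√s)⁻¹ * L)) :=
    calc _ ≤ _ := hcore
      _ ≤ √(1 + δ) * l2norm u * (2 * c * ε) + δ * √2 * l2norm u * ((√s)⁻¹ * L) := by
        gcongr
        exact mul_nonneg (Real.sqrt_nonneg _) (l2norm_nonneg _)
      _ = _ := by ring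
  calc l2norm u ≤ (√(1 + δ) * (2 * c * ε) + δ * √2 * ((√s)⁻¹ * L)) / (1 - δ) :=
        le_div_of_mul_sq_le_mul (by linarith) (by positivity) (l2norm_nonneg u) hkey
    _ = _ := by ring

/-- single-vector bound (equation (D7) in Appendix D). -/
theorem stmt6 {n m s : ℕ} (hs : 1 ≤ s)
    (B : Matrix (Fin n) (Fin m) ℝ)
    (δ : ℝ) (hδ : δ < 1) (hB : RIP (2 * s) δ B)
    (h : Fin m → ℝ) (c ε : ℝ) (hc : 0 ≤ c) (hε : 0 ≤ ε)
    (hBh : l2norm (B.mulVec h) ≤ 2 * c * ε)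
    (T0 T1 : Finset (Fin m))
    (hT0card : T0.card ≤ s)
    (hT0ccard : s ≤ (T0ᶜ : Finset (Fin m)).card)
    (hT1sub : T1 ⊆ T0ᶜ)
    (hT1card : T1.card = s)
    (hT1max : ∀ i ∈ T1, ∀ j ∈ T0ᶜ \ T1, |h j| ≤ |h i|) :
    l2norm (restrict (T0 ∪ T1) h) ≤
      (2 * Real.sqrt (1 + δ) / (1 - δ)) * c * ε +
        (Real.sqrt 2 * δ / (1 - δ)) * (Real.sqrt s)⁻¹ * l1norm (restrict T0ᶜ h) :=
  stmt6_general hs B δ hδ hB h c ε hBh T0 T1 hT0card hT1sub hT1card hT1max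
end
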